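/- arXiv:2009.03026 — 2 statements merged into one kernel-verified Lean document; each statement's English description precedes it below -/
import Mathlib

section
/- Let n ≥ 2, β > -2/n, and let λ be distributed as the Gaussian beta ensemble on ℝⁿ. Then the random variable p₁(λ) = Σ_j λ_j and the random vector λ - (1/n)p₁(λ)·(1,…,1) are independent. -/
/-!
Write `l = t • 1 + w` with `t = p₁(l) / n` and `w` the centred vector, so `∑ w = 0`. Then
`∑ l_j² = n t² + ∑ w_j²` and the Vandermonde factor only sees `w`, so the GβE density is
`exp (-n t² / 2)` times the density at `w`. Parametrising `w` as the centring of `(0, y)` with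
`y ∈ ℝⁿ⁻¹`, the map `(t, y) ↦ t • 1 + w` is a composition of two shears and therefore preserves
Lebesgue measure. In these coordinates `p₁` depends only on `t`, the centred vector only on `y`,
and the density is a product, so the two are independent.
-/

open MeasureTheory ProbabilityTheory Real
open scoped ENNReal

section Independence

variable {Ω α β δ ε : Type*} [MeasurableSpace Ω] [MeasurableSpace α] [MeasurableSpace β]
  [MeasurableSpace δ] [MeasurableSpace ε]

theorem indepFun_of_measure_inter_preimage_eq_mul {μ : Measure Ω} [IsProbabilityMeasure μ]
    {X : Ω → δ} {Y : Ω → ε} (φ : Set δ → ℝ≥0∞) (ψ : Set ε → ℝ≥0∞)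
    (h : ∀ A B, MeasurableSet A → MeasurableSet B → μ (X ⁻¹' A ∩ Y ⁻¹' B) = φ A * ψ B) :
    IndepFun X Y μ := by
  rw [indepFun_iff_measure_inter_preimage_eq_mul]
  intro A B hA hB
  have hX := h A .univ hA .univ
  have hY := h .univ B .univ hB
  have huniv := h .univ .univ .univ .univ
  simp only [Set.preimage_univ, Set.inter_univ, Set.univ_inter, measure_univ] at hX hY huniv
  calc μ (X ⁻¹' A ∩ Y ⁻¹' B) = φ A * ψ B * (φ .univ * ψ .univ) := by
        rw [h A B hA hB, ← huniv, mul_one]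
    _ = μ (X ⁻¹' A) * μ (Y ⁻¹' B) := by rw [hX, hY]; ring

theorem indepFun_withDensity_of_measurePreserving_prod {ν : Measure Ω} {ν₁ : Measure α}
    {ν₂ : Measure β} [SFinite ν₁] [SFinite ν₂] {Φ : α × β → Ω}
    (hΦ : MeasurePreserving Φ (ν₁.prod ν₂) ν) {f : Ω → ℝ≥0∞} {g : α → ℝ≥0∞} {h : β → ℝ≥0∞}
    (hf : Measurable f) (hg : Measurable g) (hh : Measurable h)
    (hfΦ : ∀ a b, f (Φ (a, b)) = g a * h b) [IsProbabilityMeasure (ν.withDensity f)]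
    {X : Ω → δ} {Y : Ω → ε} {X₁ : α → δ} {Y₂ : β → ε} (hX : Measurable X) (hY : Measurable Y)
    (hX₁ : Measurable X₁) (hY₂ : Measurable Y₂)
    (hXΦ : ∀ a b, X (Φ (a, b)) = X₁ a) (hYΦ : ∀ a b, Y (Φ (a, b)) = Y₂ b) :
    IndepFun X Y (ν.withDensity f) := by
  refine indepFun_of_measure_inter_preimage_eq_mul (fun A => ν₁.withDensity g (X₁ ⁻¹' A))
    (fun B => ν₂.withDensity h (Y₂ ⁻¹' B)) fun A B hA hB => ?_
  have hS := (hX hA).inter (hY hB)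
  have hpre : Φ ⁻¹' (X ⁻¹' A ∩ Y ⁻¹' B) = (X₁ ⁻¹' A) ×ˢ (Y₂ ⁻¹' B) := by
    ext ⟨a, b⟩
    simp [hXΦ, hYΦ]
  rw [← Measure.prod_prod, prod_withDensity hg hh, withDensity_apply _ ((hX₁ hA).prod (hY₂ hB)),
    ← hpre, withDensity_apply _ hS, ← hΦ.setLIntegral_comp_preimage hS hf]
  simp only [hfΦ]

theorem isProbabilityMeasure_withDensity_inv_mul {ν : Measure Ω} {f : Ω → ℝ} (hf : 0 ≤ f)
    {Z : ℝ} (hZ : Z = ∫ x, f x ∂ν) (hZ0 : Z ≠ 0) :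
    IsProbabilityMeasure (ν.withDensity fun x => ENNReal.ofReal (Z⁻¹ * f x)) := by
  have hint : Integrable f ν := by
    by_contra hni
    exact hZ0 (hZ.trans (integral_undef hni))
  have hinv : 0 ≤ Z⁻¹ := inv_nonneg.2 (hZ ▸ integral_nonneg hf)
  constructor
  simp_rw [withDensity_apply _ MeasurableSet.univ, Measure.restrict_univ,
    ENNReal.ofReal_mul hinv]
  rw [lintegral_const_mul' _ _ ENNReal.ofReal_ne_top,
    ← ofReal_integral_eq_lintegral_ofReal hint (ae_of_all _ hf), ← hZ, ← ENNReal.ofReal_mul hinv,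
    inv_mul_cancel₀ hZ0, ENNReal.ofReal_one]

end Independence

theorem measurePreserving_prod_add_of_measurable {α G : Type*} [MeasurableSpace α]
    [MeasurableSpace G] [AddGroup G] [MeasurableAdd₂ G] {μ : Measure α} {ν : Measure G}
    [SFinite μ] [SFinite ν] [ν.IsAddLeftInvariant] {φ : α → G} (hφ : Measurable φ) :
    MeasurePreserving (fun p : α × G => (p.1, φ p.1 + p.2)) (μ.prod ν) (μ.prod ν) :=
  (MeasurePreserving.id μ).skew_product (g := fun a b => φ a + b) (by fun_prop)
    (ae_of_all _ fun a => map_add_left_eq_self ν (φ a))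

theorem sum_sq_const_add_of_sum_eq_zero {ι : Type*} [Fintype ι] (c : ℝ) {w : ι → ℝ}
    (hw : ∑ i, w i = 0) : ∑ i, (c + w i) ^ 2 = Fintype.card ι * c ^ 2 + ∑ i, w i ^ 2 := by
  simp only [add_sq, Finset.sum_add_distrib, ← Finset.mul_sum, hw]
  simp

namespace GBE

variable {n : ℕ}

noncomputable def vandermonde (l : Fin n → ℝ) : ℝ :=
  ∏ p ∈ Finset.univ.filter (fun p : Fin n × Fin n => p.1 < p.2), (l p.2 - l p.1)

noncomputable def density (β : ℝ) (l : Fin n → ℝ) : ℝ :=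
  |vandermonde l| ^ β * exp (-(∑ j, l j ^ 2) / 2)

noncomputable def center (l : Fin n → ℝ) : Fin n → ℝ :=
  fun j => l j - (∑ j', l j') / n

theorem density_nonneg (β : ℝ) : 0 ≤ density (n := n) β :=
  fun _ => mul_nonneg (rpow_nonneg (abs_nonneg _) _) (exp_nonneg _)

@[fun_prop]
theorem measurable_density (β : ℝ) : Measurable (density (n := n) β) := by
  unfold density vandermonde
  fun_prop

@[fun_prop]
theorem measurable_center : Measurable (center (n := n)) := by
  unfold center
  fun_prop

theorem vandermonde_const_add (c : ℝ) (l : Fin n → ℝ) :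
    vandermonde (fun j => c + l j) = vandermonde l :=
  Finset.prod_congr rfl fun _ _ => by ring

theorem density_const_add (β c : ℝ) {w : Fin n → ℝ} (hw : ∑ j, w j = 0) :
    density β (fun j => c + w j) = exp (-(n * c ^ 2) / 2) * density β w := by
  rw [density, density, vandermonde_const_add, sum_sq_const_add_of_sum_eq_zero c hw,
    Fintype.card_fin, mul_left_comm, ← exp_add]
  ring_nf

variable [NeZero n]

theorem sum_center (l : Fin n → ℝ) : ∑ j, center l j = 0 := by
  simp [center, Finset.sum_sub_distrib, mul_div_cancel₀ _ (NeZero.ne (n : ℝ))]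

theorem center_const_add (c : ℝ) (l : Fin n → ℝ) :
    center (fun j => c + l j) = center l := by
  funext j
  simp only [center, Finset.sum_add_distrib, Finset.sum_const, Finset.card_univ,
    Fintype.card_fin, nsmul_eq_mul, add_div, mul_div_cancel_left₀ _ (NeZero.ne (n : ℝ))]
  ring

theorem center_center (l : Fin n → ℝ) : center (center l) = center l := by
  funext j
  rw [center, sum_center, zero_div, sub_zero]

noncomputable def chart (m : ℕ) (p : ℝ × (Fin m → ℝ)) : Fin (m + 1) → ℝ :=
  fun j => p.1 + center (Fin.cons 0 p.2 : Fin (m + 1) → ℝ) j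

theorem chart_eq_cons (m : ℕ) (t : ℝ) (y : Fin m → ℝ) :
    chart m (t, y) = Fin.cons (-(∑ i, y i) / (m + 1) + t)
      fun i => (-(∑ i, y i) / (m + 1) + t) + y i := by
  funext j
  refine Fin.cases ?_ (fun i => ?_) j <;>
    simp only [chart, center, Fin.cons_zero, Fin.cons_succ, Fin.sum_cons, zero_add, Nat.cast_add,
      Nat.cast_one, zero_sub] <;> ring

theorem measurePreserving_chart (m : ℕ) :
    MeasurePreserving (chart m) (volume.prod volume) volume := by
  have shift_head := (Measure.measurePreserving_swap.comp
    (measurePreserving_prod_add_of_measurable (μ := (volume : Measure (Fin m → ℝ)))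
      (ν := (volume : Measure ℝ)) (φ := fun y => -(∑ i, y i) / (m + 1)) (by fun_prop))).comp
    Measure.measurePreserving_swap
  have shift_tail := measurePreserving_prod_add_of_measurable (μ := (volume : Measure ℝ))
    (ν := (volume : Measure (Fin m → ℝ))) (φ := fun s _ => s) (by fun_prop)
  have cons := (volume_preserving_piFinSuccAbove (fun _ : Fin (m + 1) => ℝ) 0).symm
  convert cons.comp (shift_tail.comp shift_head) using 1 <;> try rfl
  funext ⟨t, y⟩
  simp only [chart_eq_cons, MeasurableEquiv.piFinSuccAbove_symm_apply, Fin.insertNthEquiv_zero,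
    Fin.consEquiv, Equiv.coe_fn_mk, Function.comp_apply, Prod.swap_prod_mk, Fin.cons_inj, true_and]
  rfl

theorem sum_chart (m : ℕ) (t : ℝ) (y : Fin m → ℝ) :
    ∑ j, chart m (t, y) j = ((m + 1 : ℕ) : ℝ) * t := by
  simp [chart, Finset.sum_add_distrib, sum_center]

theorem center_chart (m : ℕ) (t : ℝ) (y : Fin m → ℝ) :
    center (chart m (t, y)) = center (Fin.cons 0 y : Fin (m + 1) → ℝ) :=
  (center_const_add t _).trans (center_center _)

theorem density_chart (m : ℕ) (β t : ℝ) (y : Fin m → ℝ) :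
    density β (chart m (t, y)) = exp (-(((m + 1 : ℕ) : ℝ) * t ^ 2) / 2) *
      density β (center (Fin.cons 0 y : Fin (m + 1) → ℝ)) :=
  density_const_add β t (sum_center _)

end GBE

theorem gbe_center_indep_general (n : ℕ) (hn : 2 ≤ n) (β : ℝ)
    (Z : ℝ) (μ : Measure (Fin n → ℝ))
    (hZ : Z = ∫ l : Fin n → ℝ,
      |∏ p ∈ Finset.univ.filter (fun p : Fin n × Fin n => p.1 < p.2), (l p.2 - l p.1)| ^ β
        * Real.exp (-(∑ j, l j ^ 2) / 2))
    (hμ : μ = (volume : Measure (Fin n → ℝ)).withDensity fun l =>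
      ENNReal.ofReal (Z⁻¹ *
        (|∏ p ∈ Finset.univ.filter (fun p : Fin n × Fin n => p.1 < p.2), (l p.2 - l p.1)| ^ β
          * Real.exp (-(∑ j, l j ^ 2) / 2)))) :
    IndepFun (fun l => ∑ j, l j) (fun l => fun j => l j - (∑ j', l j') / (n : ℝ)) μ := by
  obtain ⟨m, rfl⟩ : ∃ m, n = m + 1 := ⟨n - 1, by omega⟩
  rcases eq_or_ne Z 0 with hZ0 | hZ0
  -- the junk value of a non-integrable density: `Z = 0` forces `μ = 0`
  · rw [indepFun_iff_measure_inter_preimage_eq_mul]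
    simp [hμ, hZ0]
  change Z = ∫ l, GBE.density β l at hZ
  change μ = volume.withDensity fun l => ENNReal.ofReal (Z⁻¹ * GBE.density β l) at hμ
  subst hμ
  have := isProbabilityMeasure_withDensity_inv_mul (GBE.density_nonneg β) hZ hZ0
  have hZinv : 0 ≤ Z⁻¹ := inv_nonneg.2 (hZ ▸ integral_nonneg (GBE.density_nonneg β))
  refine indepFun_withDensity_of_measurePreserving_prod (GBE.measurePreserving_chart m)
    (g := fun t => ENNReal.ofReal (Z⁻¹ * exp (-(((m + 1 : ℕ) : ℝ) * t ^ 2) / 2)))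
    (h := fun y => ENNReal.ofReal (GBE.density β (GBE.center (Fin.cons 0 y : Fin (m + 1) → ℝ))))
    (X₁ := fun t => ((m + 1 : ℕ) : ℝ) * t)
    (Y₂ := fun y => GBE.center (Fin.cons 0 y : Fin (m + 1) → ℝ))
    (by fun_prop) (by fun_prop) (by fun_prop) (fun t y => ?_) (by fun_prop) (by fun_prop)
    (by fun_prop) (by fun_prop) (GBE.sum_chart m) (GBE.center_chart m)
  rw [GBE.density_chart, ← mul_assoc, ENNReal.ofReal_mul (mul_nonneg hZinv (exp_nonneg _))]

/-- Under the GβE, `p₁(λ)` and the centered vector `λ - p₁(λ)/n` are independent. -/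
theorem gbe_center_indep (n : ℕ) (hn : 2 ≤ n) (β : ℝ) (hβ : -2 / n < β)
    (Z : ℝ) (μ : Measure (Fin n → ℝ))
    (hZ : Z = ∫ l : Fin n → ℝ,
      |∏ p ∈ Finset.univ.filter (fun p : Fin n × Fin n => p.1 < p.2), (l p.2 - l p.1)| ^ β
        * Real.exp (-(∑ j, l j ^ 2) / 2))
    (hμ : μ = (volume : Measure (Fin n → ℝ)).withDensity fun l =>
      ENNReal.ofReal (Z⁻¹ *
        (|∏ p ∈ Finset.univ.filter (fun p : Fin n × Fin n => p.1 < p.2), (l p.2 - l p.1)| ^ β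
          * Real.exp (-(∑ j, l j ^ 2) / 2)))) :
    IndepFun (fun l => ∑ j, l j) (fun l => fun j => l j - (∑ j', l j') / (n : ℝ)) μ :=
  gbe_center_indep_general n hn β Z μ hZ hμ
end

section
/- Define c(ν, β, n) for finite sequences ν of positive integers with |ν| := Σ_k ν_k even by the Schwinger-Dyson recursion: c(ν) = (β/2)Σ_{i=1}^{ν_m - 1} c((ν_r)_{r≠m}, i-1, ν_m-1-i) + (1-β/2)(ν_m-1)c((ν_r)_{r≠m}, ν_m-2) + Σ_{k=1}^{m-1} ν_k c((ν_r)_{r≠k,m}, ν_k+ν_m-2), with conventions c((0)) = n, c(∅) = 1 (where m = length of ν). Then at β = -2/n, c(ν, -2/n, n) = n^{m(ν) - |ν|/2} · |ν|!/(2^{|ν|/2}(|ν|/2)!). -/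
/-!
Write `|ν| = 2t` and `m` for the length of `ν`, and insert the ansatz `c(ν) = n^(m-t) (2t-1)‼`
into the recursion with last entry `q`. All terms on the right have degree `2t - 2`; in units of
`n^(m-t) (2t-3)‼`, at `β = -2/n` the splitting terms contribute `-(q-1) n`, the `(q-1)` term
contributes `(n+1)(q-1)` and the merging terms contribute `|ν| - q`. The total `2t - 1` is exactly
`(2t-1)‼ / (2t-3)‼`, so the ansatz solves the recursion, by strong induction on `|ν| + m`.
-/

open Finset Nat

lemma List.sum_range_getD {M : Type*} [AddCommMonoid M] (l : List M) :
    ∑ k ∈ Finset.range l.length, l.getD k 0 = l.sum := by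
  rw [sum_range, ← Fin.sum_univ_getElem]
  simp

lemma List.sum_eraseIdx_add_getD {M : Type*} [AddCommMonoid M] {l : List M} {k : ℕ}
    (hk : k < l.length) : (l.eraseIdx k).sum + l.getD k 0 = l.sum := by
  rw [List.getD_eq_getElem l 0 hk, add_comm, List.CommMonoid.add_sum_eraseIdx hk]

lemma Nat.factorial_eq_doubleFactorial_mul_doubleFactorial_sub_one (n : ℕ) :
    n ! = n‼ * (n - 1)‼ := by
  cases n with
  | zero => rfl
  | succ n => exact factorial_eq_mul_doubleFactorial n

lemma Nat.cast_doubleFactorial_two_mul_sub_one {K : Type*} [Field K] [CharZero K] (t : ℕ) :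
    ((2 * t - 1)‼ : K) = (2 * t)! / (2 ^ t * t !) := by
  have : (2 ^ t * t ! : K) ≠ 0 := by simp [t.factorial_ne_zero]
  rw [factorial_eq_doubleFactorial_mul_doubleFactorial_sub_one, doubleFactorial_two_mul,
    eq_div_iff this]
  push_cast
  ring

structure IsSchwingerDysonSolution (n β : ℝ) (c : List ℕ → ℝ) : Prop where
  nil : c [] = 1
  append_zero : ∀ l, c (l ++ [0]) = n * c l
  append_pos : ∀ (l : List ℕ) (q : ℕ), 1 ≤ q → Even (l.sum + q) →
    c (l ++ [q]) =
      β / 2 * ∑ i ∈ Icc 1 (q - 1), c (l ++ [i - 1, q - 1 - i])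
      + (1 - β / 2) * ((q : ℝ) - 1) * c (l ++ [q - 2])
      + ∑ k ∈ range l.length, (l.getD k 0 : ℝ) * c (l.eraseIdx k ++ [l.getD k 0 + q - 2])

namespace SchwingerDyson

/-- At `t = 0` the truncated `2 * t - 1` is `0`, and `0‼ = 1` is the intended `(-1)‼`. -/
noncomputable def closedForm (n : ℝ) (L t : ℕ) : ℝ := n ^ L / n ^ t * (2 * t - 1)‼

variable {n : ℝ} {c : List ℕ → ℝ}

lemma closedForm_succ_succ (hn : n ≠ 0) (L t : ℕ) :
    closedForm n (L + 1) (t + 1) = (2 * t + 1) * closedForm n L t := by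
  have : 2 * (t + 1) - 1 = 2 * t + 1 := by omega
  rw [closedForm, closedForm, this, doubleFactorial_add_one, pow_succ, pow_succ]
  push_cast
  field_simp

lemma closedForm_recursion (hn : n ≠ 0) {L q s t : ℕ} (hs : s + q = 2 * t + 2) :
    -2 / n / 2 * ((q - 1) * closedForm n (L + 2) t)
      + (1 - -2 / n / 2) * ((q - 1) * closedForm n (L + 1) t) + s * closedForm n L t
      = closedForm n (L + 1) (t + 1) := by
  have hs' : (s : ℝ) = 2 * t + 2 - q := by
    rw [eq_sub_iff_add_eq]; exact_mod_cast hs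
  rw [closedForm_succ_succ hn, hs']
  simp only [closedForm, pow_add]
  field_simp
  ring

variable (hc : IsSchwingerDysonSolution n (-2 / n) c)
include hc

lemma eq_closedForm_append_zero {l : List ℕ} {t : ℕ} (hl : c l = closedForm n l.length t) :
    c (l ++ [0]) = closedForm n (l ++ [0]).length t := by
  rw [hc.append_zero, hl, List.length_append, List.length_singleton, closedForm, closedForm,
    pow_succ]
  ring

lemma eq_closedForm_append_pos (hn : n ≠ 0) {l : List ℕ} {q t : ℕ} (hq : 1 ≤ q)
    (hsum : l.sum + q = 2 * (t + 1))
    (ih : ∀ μ : List ℕ, μ.sum = 2 * t → μ.length ≤ l.length + 2 → c μ = closedForm n μ.length t) :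
    c (l ++ [q]) = closedForm n (l ++ [q]).length (t + 1) := by
  have hsplit : ∑ i ∈ Icc 1 (q - 1), c (l ++ [i - 1, q - 1 - i])
      = (q - 1) * closedForm n (l.length + 2) t := by
    rw [sum_congr rfl fun i hi => ih _ ?_ ?_]
    · have hlen : ∀ i j, (l ++ [i, j]).length = l.length + 2 := fun _ _ => by simp
      simp only [hlen, sum_const, card_Icc, nsmul_eq_mul, Nat.add_sub_cancel, Nat.cast_pred hq]
    · simp only [List.sum_append, List.sum_cons, List.sum_nil]
      simp only [mem_Icc] at hi
      omega
    · simp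
  have hfold : ((q : ℝ) - 1) * c (l ++ [q - 2]) = (q - 1) * closedForm n (l.length + 1) t := by
    rcases hq.eq_or_lt with rfl | hq2
    · simp
    · rw [ih _ (by simp only [List.sum_append, List.sum_singleton]; omega) (by simp)]
      simp
  have hmerge : ∀ k ∈ Finset.range l.length,
      (l.getD k 0 : ℝ) * c (l.eraseIdx k ++ [l.getD k 0 + q - 2])
        = l.getD k 0 * closedForm n l.length t := by
    intro k hk
    rw [Finset.mem_range] at hk
    rcases (l.getD k 0).eq_zero_or_pos with h0 | hpos
    · rw [h0, Nat.cast_zero, zero_mul, zero_mul]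
    · have herase := List.sum_eraseIdx_add_getD hk
      rw [ih _ ?_ ?_]
      · simp only [List.length_append, List.length_eraseIdx_of_lt hk, List.length_singleton]
        congr 2
        omega
      · simp only [List.sum_append, List.sum_singleton]
        omega
      · simp only [List.length_append, List.length_eraseIdx_of_lt hk, List.length_singleton]
        omega
  rw [hc.append_pos l q hq (by rw [hsum]; exact even_two_mul _), hsplit, mul_assoc, hfold,
    sum_congr rfl hmerge, ← sum_mul, ← Nat.cast_sum, List.sum_range_getD, List.length_append,
    List.length_singleton, closedForm_recursion hn (by omega)]

theorem eq_closedForm (hn : n ≠ 0) (ν : List ℕ) (t : ℕ) (hν : ν.sum = 2 * t) :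
    c ν = closedForm n ν.length t := by
  induction h : ν.sum + ν.length using Nat.strong_induction_on generalizing ν t with
  | _ N ih =>
  rcases ν.eq_nil_or_concat' with rfl | ⟨l, q, rfl⟩
  · obtain rfl : t = 0 := by rw [List.sum_nil] at hν; omega
    simp [hc.nil, closedForm]
  simp only [List.sum_append, List.sum_singleton, List.length_append,
    List.length_singleton] at hν h
  rcases q.eq_zero_or_pos with rfl | hq
  · exact eq_closedForm_append_zero hc (ih _ (by omega) l t hν rfl)
  obtain ⟨t, rfl⟩ : ∃ t', t = t' + 1 := ⟨t - 1, by omega⟩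
  exact eq_closedForm_append_pos hc hn hq hν fun μ hμ hlen => ih _ (by omega) μ t hμ rfl

end SchwingerDyson

/-- The solutions `c(ν, β, n)` of the Schwinger-Dyson recursion, at `β = -2/n`, are given by
`c(ν) = n^{m(ν) - |ν|/2} |ν|! / (2^{|ν|/2} (|ν|/2)!)`. -/
theorem schwinger_dyson_solution_at_beta_neg_two_over_n
    (n : ℕ) (hn : 2 ≤ n) (β : ℝ) (hβ : β = -2 / n)
    (c : List ℕ → ℝ)
    (hempty : c [] = 1)
    (hzero : ∀ l₁ l₂ : List ℕ, c (l₁ ++ 0 :: l₂) = n * c (l₁ ++ l₂))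
    (hrec : ∀ (l : List ℕ) (q : ℕ), 1 ≤ q → Even (l.sum + q) →
      c (l ++ [q]) =
        β / 2 * ∑ i ∈ Finset.Icc 1 (q - 1), c (l ++ [i - 1, q - 1 - i])
        + (1 - β / 2) * ((q : ℝ) - 1) * c (l ++ [q - 2])
        + ∑ k ∈ Finset.range l.length,
            (l.getD k 0 : ℝ) * c (l.eraseIdx k ++ [l.getD k 0 + q - 2])) :
    ∀ ν : List ℕ, (∀ k ∈ ν, 0 < k) → Even ν.sum →
      c ν = (n : ℝ) ^ ((ν.length : ℤ) - (ν.sum / 2 : ℕ)) *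
        (Nat.factorial ν.sum) / (2 ^ (ν.sum / 2) * Nat.factorial (ν.sum / 2)) := by
  subst hβ
  have hn₀ : (n : ℝ) ≠ 0 := Nat.cast_ne_zero.mpr (by omega)
  have hc : IsSchwingerDysonSolution n (-2 / n) c :=
    ⟨hempty, fun l => by simpa using hzero l [], hrec⟩
  intro ν _ ⟨t, hν⟩
  have ht : ν.sum / 2 = t := by omega
  rw [SchwingerDyson.eq_closedForm hc hn₀ ν t (by omega), SchwingerDyson.closedForm,
    cast_doubleFactorial_two_mul_sub_one, ht, hν, ← two_mul, zpow_sub₀ hn₀, zpow_natCast,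
    zpow_natCast]
  ring
end
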